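/- Let Φ : I → ℝ be a convex function on an interval I of positive real numbers that is continuously differentiable on the interior of I, let T, V be bounded linear invertible operators on a complex Hilbert space H, and let 0 < m < M with [m², M²] contained in the interior of I and m‖Tx‖ ≤ ‖Vx‖ ≤ M‖Tx‖ for all x ∈ H. Then, writing c := (m²+M²)/2, in the operator order: ⊙_Φ(V,T) ≤ Φ(c)|T|² + Φ'(c)(|V|² − c|T|²) + (1/2)(M² − m²)[Φ'(M²) − Φ'(m²)]·|T|². -/

import Mathlib

variable {H : Type*} [NormedAddCommGroup H] [InnerProductSpace ℂ H] [CompleteSpace H]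

/-- `X = |VT⁻¹|² = (T*)⁻¹ V* V T⁻¹`. -/
noncomputable def qX (V T : (H →L[ℂ] H)ˣ) : H →L[ℂ] H :=
  star (↑(T⁻¹) : H →L[ℂ] H) * (star (V : H →L[ℂ] H) * (V : H →L[ℂ] H)) * (↑(T⁻¹) : H →L[ℂ] H)

/-- The quadratic operator perspective `⊙_Φ(V,T) = T* Φ(X) T`. -/
noncomputable def qPersp (Φ : ℝ → ℝ) (V T : (H →L[ℂ] H)ˣ) : H →L[ℂ] H :=
  star (T : H →L[ℂ] H) * cfc Φ (qX V T) * (T : H →L[ℂ] H)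

/-- `|T|² = T*T`. -/
noncomputable def modSq (T : (H →L[ℂ] H)ˣ) : H →L[ℂ] H :=
  star (T : H →L[ℂ] H) * (T : H →L[ℂ] H)

/-!
Convexity bounds the error of the tangent of `Φ` at `c` by `(Φ'(t) - Φ'(c)) (t - c)`, which on
`[m², M²]` is at most `(Φ'(M²) - Φ'(m²)) (M² - m²) / 2`. The hypothesis on `V` and `T` puts the
spectrum of `X` in `[m², M²]`, so the functional calculus turns this scalar bound into an affine
upper bound for `Φ(X)`; conjugating by `T` and using `T* X T = |V|²` gives the theorem.
-/

open scoped InnerProductSpace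

namespace ConvexOn

variable {S : Set ℝ} {f f' : ℝ → ℝ} {x y : ℝ}

lemma sub_le_mul_sub_of_hasDerivAt (hf : ConvexOn ℝ S f) (hx : x ∈ S) (hy : y ∈ S)
    (hfy : HasDerivAt f (f' y) y) : f y - f x ≤ f' y * (y - x) := by
  rcases lt_trichotomy x y with hxy | rfl | hyx
  · have := hf.slope_le_of_hasDerivAt hx hy hxy hfy
    rwa [slope_def_field, div_le_iff₀ (sub_pos.2 hxy)] at this
  · simp
  · have := hf.le_slope_of_hasDerivAt hy hx hyx hfy
    rw [slope_def_field, le_div_iff₀ (sub_pos.2 hyx)] at this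
    linarith

lemma monotoneOn_of_hasDerivAt (hf : ConvexOn ℝ S f) (hf' : ∀ s ∈ S, HasDerivAt f (f' s) s) :
    MonotoneOn f' S := by
  intro x hx y hy hxy
  rcases hxy.eq_or_lt with rfl | hxy
  · rfl
  have hy' := hf.sub_le_mul_sub_of_hasDerivAt hx hy (hf' y hy)
  have hx' := hf.sub_le_mul_sub_of_hasDerivAt hy hx (hf' x hx)
  nlinarith

lemma le_midpoint_tangent_add {a b t : ℝ} (hf : ConvexOn ℝ S f)
    (hf' : ∀ s ∈ S, HasDerivAt f (f' s) s) (hab : Set.Icc a b ⊆ S) (ht : t ∈ Set.Icc a b) :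
    f t ≤ f ((a + b) / 2) + f' ((a + b) / 2) * (t - (a + b) / 2)
      + 1 / 2 * (b - a) * (f' b - f' a) := by
  obtain ⟨hat, htb⟩ := ht
  have hc : (a + b) / 2 ∈ Set.Icc a b := ⟨by linarith, by linarith⟩
  have hmono := (hf.monotoneOn_of_hasDerivAt hf').mono hab
  have hmono' {x y : ℝ} (hx : x ∈ Set.Icc a b) (hy : y ∈ Set.Icc a b) (hxy : x ≤ y) :
      0 ≤ f' y - f' x ∧ f' y - f' x ≤ f' b - f' a :=
    ⟨sub_nonneg.2 (hmono hx hy hxy), sub_le_sub (hmono hy ⟨hy.1.trans hy.2, le_rfl⟩ hy.2)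
      (hmono ⟨le_rfl, hx.1.trans hx.2⟩ hx hx.1)⟩
  have htangent :=
    hf.sub_le_mul_sub_of_hasDerivAt (hab hc) (hab ⟨hat, htb⟩) (hf' t (hab ⟨hat, htb⟩))
  rcases le_total t ((a + b) / 2) with htc | hct
  · obtain ⟨h0, h1⟩ := hmono' ⟨hat, htb⟩ hc htc
    nlinarith [mul_le_mul h1 (show (a + b) / 2 - t ≤ (b - a) / 2 by linarith)
      (sub_nonneg.2 htc) (by linarith)]
  · obtain ⟨h0, h1⟩ := hmono' hc ⟨hat, htb⟩ hct
    nlinarith [mul_le_mul h1 (show t - (a + b) / 2 ≤ (b - a) / 2 by linarith)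
      (sub_nonneg.2 hct) (by linarith)]

end ConvexOn

namespace ContinuousLinearMap

lemma algebraMap_sq_le_star_mul_self {A : H →L[ℂ] H} {m : ℝ} (hm : 0 ≤ m)
    (h : ∀ x, m * ‖x‖ ≤ ‖A x‖) : algebraMap ℝ (H →L[ℂ] H) (m ^ 2) ≤ star A * A := by
  rw [le_def, isPositive_def']
  refine ⟨(IsSelfAdjoint.star_mul_self A).sub (.algebraMap _ (.all _)), fun x => ?_⟩
  have hA : ‖A x‖ ^ 2 = RCLike.re ⟪(star A * A) x, x⟫_ℂ := apply_norm_sq_eq_inner_adjoint_left A x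
  have hm : RCLike.re ⟪algebraMap ℝ (H →L[ℂ] H) (m ^ 2) x, x⟫_ℂ = m ^ 2 * ‖x‖ ^ 2 := by
    simp [Algebra.algebraMap_eq_smul_one, inner_self_eq_norm_sq_to_K, ← Complex.ofReal_pow]
  rw [reApplyInnerSelf_apply, sub_apply, inner_sub_left, map_sub, ← hA, hm, ← mul_pow]
  exact sub_nonneg.2 (pow_le_pow_left₀ (by positivity) (h x) 2)

lemma star_mul_self_le_algebraMap_sq {A : H →L[ℂ] H} {M : ℝ} (hM : 0 ≤ M)
    (h : ∀ x, ‖A x‖ ≤ M * ‖x‖) : star A * A ≤ algebraMap ℝ (H →L[ℂ] H) (M ^ 2) :=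
  CStarAlgebra.star_mul_le_algebraMap_norm_sq.trans <| algebraMap_mono (H →L[ℂ] H) <|
    pow_le_pow_left₀ (norm_nonneg A) (opNorm_le_bound A hM h) 2

end ContinuousLinearMap

section QuadraticPerspective

variable {V T : (H →L[ℂ] H)ˣ}

lemma qX_eq_star_mul_self (V T : (H →L[ℂ] H)ˣ) :
    qX V T = star ((V : H →L[ℂ] H) * ↑T⁻¹) * ((V : H →L[ℂ] H) * ↑T⁻¹) := by
  simp only [qX, star_mul, mul_assoc]

lemma isSelfAdjoint_qX (V T : (H →L[ℂ] H)ˣ) : IsSelfAdjoint (qX V T) :=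
  qX_eq_star_mul_self V T ▸ .star_mul_self _

lemma star_mul_qX_mul (V T : (H →L[ℂ] H)ˣ) :
    star (T : H →L[ℂ] H) * qX V T * T = modSq V := by
  have hstar : star (T : H →L[ℂ] H) * star ↑T⁻¹ = 1 := by rw [← star_mul, T.inv_mul, star_one]
  simp only [qX, modSq, ← mul_assoc, hstar, one_mul]
  simp [mul_assoc]

lemma spectrum_qX_subset_Icc {m M : ℝ} (hm : 0 ≤ m) (hM : 0 ≤ M)
    (hTV : ∀ x : H, m * ‖(T : H →L[ℂ] H) x‖ ≤ ‖(V : H →L[ℂ] H) x‖ ∧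
      ‖(V : H →L[ℂ] H) x‖ ≤ M * ‖(T : H →L[ℂ] H) x‖) :
    spectrum ℝ (qX V T) ⊆ Set.Icc (m ^ 2) (M ^ 2) := by
  have hbound (y : H) : m * ‖y‖ ≤ ‖((V : H →L[ℂ] H) * ↑T⁻¹) y‖ ∧
      ‖((V : H →L[ℂ] H) * ↑T⁻¹) y‖ ≤ M * ‖y‖ := by
    have hTy : (T : H →L[ℂ] H) ((↑T⁻¹ : H →L[ℂ] H) y) = y := by
      rw [← mul_apply_eq_comp, T.mul_inv, one_apply_eq_self]
    simpa [hTy] using hTV ((↑T⁻¹ : H →L[ℂ] H) y)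
  have hsa := IsSelfAdjoint.star_mul_self ((V : H →L[ℂ] H) * ↑T⁻¹)
  intro t ht
  rw [qX_eq_star_mul_self] at ht
  exact ⟨(algebraMap_le_iff_le_spectrum hsa).1
      (ContinuousLinearMap.algebraMap_sq_le_star_mul_self hm fun y => (hbound y).1) t ht,
    (le_algebraMap_iff_spectrum_le hsa).1
      (ContinuousLinearMap.star_mul_self_le_algebraMap_sq hM fun y => (hbound y).2) t ht⟩

lemma qPersp_le_of_le_affine {Φ : ℝ → ℝ} {α β : ℝ}
    (hΦ : ContinuousOn Φ (spectrum ℝ (qX V T)))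
    (h : ∀ t ∈ spectrum ℝ (qX V T), Φ t ≤ α + β * t) :
    qPersp Φ V T ≤ α • modSq T + β • modSq V := by
  have := isSelfAdjoint_qX V T
  have hX : cfc Φ (qX V T) ≤ algebraMap ℝ (H →L[ℂ] H) α + β • qX V T := by
    calc cfc Φ (qX V T) ≤ cfc (fun t => α + β * t) (qX V T) := cfc_mono h
      _ = algebraMap ℝ (H →L[ℂ] H) α + β • qX V T := by
        rw [cfc_add .., cfc_const .., cfc_const_mul .., cfc_id' ..]
  refine (star_left_conjugate_le_conjugate hX (T : H →L[ℂ] H)).trans_eq ?_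
  rw [mul_add, add_mul, Algebra.algebraMap_eq_smul_one, mul_smul_comm, smul_mul_assoc, mul_one,
    mul_smul_comm, smul_mul_assoc, star_mul_qX_mul]
  rfl

end QuadraticPerspective

theorem stmt9_general (I : Set ℝ)
    (Φ Φ' : ℝ → ℝ) (hΦ : ConvexOn ℝ I Φ)
    (hΦ' : ∀ s ∈ interior I, HasDerivAt Φ (Φ' s) s)
    (T V : (H →L[ℂ] H)ˣ) (m M : ℝ) (hm : 0 < m) (hmM : m < M)
    (hsub : Set.Icc (m ^ 2) (M ^ 2) ⊆ interior I)
    (hTV : ∀ x : H, m * ‖(T : H →L[ℂ] H) x‖ ≤ ‖(V : H →L[ℂ] H) x‖ ∧ ‖(V : H →L[ℂ] H) x‖ ≤ M * ‖(T : H →L[ℂ] H) x‖)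
    (c : ℝ) (hc : c = (m ^ 2 + M ^ 2) / 2) :
    qPersp Φ V T ≤
      Φ c • modSq T + Φ' c • (modSq V - c • modSq T) +
        ((1 / 2) * (M ^ 2 - m ^ 2) * (Φ' (M ^ 2) - Φ' (m ^ 2))) • modSq T := by
  set K := (1 / 2) * (M ^ 2 - m ^ 2) * (Φ' (M ^ 2) - Φ' (m ^ 2)) with hK
  have hspec : spectrum ℝ (qX V T) ⊆ Set.Icc (m ^ 2) (M ^ 2) :=
    spectrum_qX_subset_Icc hm.le (hm.trans hmM).le hTV
  have hΦint : ConvexOn ℝ (interior I) Φ := hΦ.subset interior_subset hΦ.1.interior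
  have hΦcont : ContinuousOn Φ (spectrum ℝ (qX V T)) := fun s hs =>
    (hΦ' s (hsub (hspec hs))).continuousAt.continuousWithinAt
  calc qPersp Φ V T ≤ (Φ c - Φ' c * c + K) • modSq T + Φ' c • modSq V := by
        refine qPersp_le_of_le_affine hΦcont fun t ht => ?_
        have := hΦint.le_midpoint_tangent_add hΦ' hsub (hspec ht)
        rw [← hc, ← hK] at this
        linarith
    _ = _ := by module

theorem stmt9 (I : Set ℝ) (hIpos : I ⊆ Set.Ioi 0)
    (Φ Φ' : ℝ → ℝ) (hΦ : ConvexOn ℝ I Φ)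
    (hΦ' : ∀ s ∈ interior I, HasDerivAt Φ (Φ' s) s)
    (hΦ'c : ContinuousOn Φ' (interior I))
    (T V : (H →L[ℂ] H)ˣ) (m M : ℝ) (hm : 0 < m) (hmM : m < M)
    (hsub : Set.Icc (m ^ 2) (M ^ 2) ⊆ interior I)
    (hTV : ∀ x : H, m * ‖(T : H →L[ℂ] H) x‖ ≤ ‖(V : H →L[ℂ] H) x‖ ∧ ‖(V : H →L[ℂ] H) x‖ ≤ M * ‖(T : H →L[ℂ] H) x‖)
    (c : ℝ) (hc : c = (m ^ 2 + M ^ 2) / 2) :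
    qPersp Φ V T ≤
      Φ c • modSq T + Φ' c • (modSq V - c • modSq T) +
        ((1 / 2) * (M ^ 2 - m ^ 2) * (Φ' (M ^ 2) - Φ' (m ^ 2))) • modSq T :=
  stmt9_general I Φ Φ' hΦ hΦ' T V m M hm hmM hsub hTV c hc
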